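/- arXiv:2602.07075 — 2 statements merged into one kernel-verified Lean document; each statement's English description precedes it below -/
import Mathlib

section
/- Let L > 0, ρ > 0, δ > 0, v_min > 0, and let κ : [0, L] → ℝ be a nonnegative continuous function. Let N ∈ ℕ and let 0 = s₀ < s₁ < ⋯ < s_N = L be a partition such that for every k < N: (i) s_{k+1} − s_k ≤ ρ, and (ii) s_{k+1} − s_k ≤ (1/v_min) · √(8δ / κ_k), where κ_k = sup_{u ∈ [s_k, s_{k+1}]} κ(u) (with the convention that (ii) holds vacuously if κ_k = 0). Then N ≥ ∫₀ᴸ max(1/ρ, v_min · √(κ(s)/(8δ))) ds. -/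
open MeasureTheory intervalIntegral Set

/-- The Curvature–Resolution theorem: a partition subject to the
resolution constraint `s_{k+1} − s_k ≤ ρ` and the curvature constraint
`s_{k+1} − s_k ≤ (1/v_min)·√(8δ/κ_k)` (vacuous when `κ_k = 0`) has at
least `∫₀ᴸ max(1/ρ, v_min·√(κ(s)/(8δ))) ds` segments. -/
theorem curvature_resolution (L ρ δ vmin : ℝ) (hL : 0 < L) (hρ : 0 < ρ)
    (hδ : 0 < δ) (hv : 0 < vmin) (κ : ℝ → ℝ)
    (hκcont : ContinuousOn κ (Icc 0 L))
    (hκ0 : ∀ u ∈ Icc (0 : ℝ) L, 0 ≤ κ u)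
    (N : ℕ) (s : ℕ → ℝ) (hs0 : s 0 = 0) (hsN : s N = L)
    (hmono : ∀ k < N, s k < s (k + 1))
    (hres : ∀ k < N, s (k + 1) - s k ≤ ρ)
    (hcurv : ∀ k < N, 0 < sSup (κ '' Icc (s k) (s (k + 1))) →
      s (k + 1) - s k ≤
        (1 / vmin) * Real.sqrt (8 * δ / sSup (κ '' Icc (s k) (s (k + 1))))) :
    (N : ℝ) ≥ ∫ x in (0:ℝ)..L, max (1 / ρ) (vmin * Real.sqrt (κ x / (8 * δ))) := by
  -- monotonicity of the partition
  have hmono' : ∀ i j : ℕ, i ≤ j → j ≤ N → s i ≤ s j := by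
    intro i j hij hjN
    induction j with
    | zero => simp [Nat.le_zero.mp hij]
    | succ j ih =>
      rcases Nat.eq_or_lt_of_le hij with h | h
      · rw [h]
      · exact le_trans (ih (Nat.lt_succ_iff.mp h) (le_trans (Nat.le_succ j) hjN))
          (le_of_lt (hmono j (Nat.lt_of_succ_le hjN)))
  have hrange : ∀ k ≤ N, s k ∈ Icc (0 : ℝ) L := fun k hk =>
    ⟨hs0 ▸ hmono' 0 k (Nat.zero_le k) hk, hsN ▸ hmono' k N hk le_rfl⟩
  set f : ℝ → ℝ := fun x => max (1 / ρ) (vmin * Real.sqrt (κ x / (8 * δ))) with hf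
  have hfcont : ContinuousOn f (Icc 0 L) :=
    (continuous_const.max continuous_id).comp_continuousOn
      (continuousOn_const.mul ((hκcont.div_const _).sqrt))
  have hsub : ∀ k < N, Icc (s k) (s (k + 1)) ⊆ Icc (0 : ℝ) L := by
    intro k hk
    exact Icc_subset_Icc (hrange k (le_of_lt hk)).1 (hrange (k + 1) hk).2
  have hint : ∀ k < N, IntervalIntegrable f volume (s k) (s (k + 1)) := by
    intro k hk
    apply ContinuousOn.intervalIntegrable
    apply hfcont.mono
    rw [uIcc_of_le (le_of_lt (hmono k hk))]
    exact hsub k hk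
  have hsum := intervalIntegral.sum_integral_adjacent_intervals (f := f) (μ := volume)
    (a := s) (n := N) hint
  rw [hs0, hsN] at hsum
  rw [ge_iff_le, show (∫ x in (0:ℝ)..L, max (1 / ρ)
      (vmin * Real.sqrt (κ x / (8 * δ)))) = ∫ x in (0:ℝ)..L, f x from rfl, ← hsum]
  have hbound : ∀ k ∈ Finset.range N, (∫ x in s k..s (k + 1), f x) ≤ 1 := by
    intro k hk'
    have hk : k < N := Finset.mem_range.mp hk'
    set a := s k
    set b := s (k + 1)
    have hab : a < b := hmono k hk
    have hΔ : 0 < b - a := by linarith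
    set K := sSup (κ '' Icc a b) with hK
    have hbdd : BddAbove (κ '' Icc a b) :=
      (isCompact_Icc.image_of_continuousOn (hκcont.mono (hsub k hk))).bddAbove
    have hle : ∀ x ∈ Icc a b, κ x ≤ K := fun x hx => le_csSup hbdd ⟨x, hx, rfl⟩
    have hK0 : 0 ≤ K :=
      le_trans (hκ0 a (hsub k hk ⟨le_rfl, le_of_lt hab⟩)) (hle a ⟨le_rfl, le_of_lt hab⟩)
    set M := max (1 / ρ) (vmin * Real.sqrt (K / (8 * δ))) with hM
    have h8δ : (0 : ℝ) < 8 * δ := by linarith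
    have hfM : ∀ x ∈ Icc a b, f x ≤ M := by
      intro x hx
      apply max_le_max le_rfl
      apply mul_le_mul_of_nonneg_left _ (le_of_lt hv)
      exact Real.sqrt_le_sqrt (by gcongr; exact hle x hx)
    have hint' : IntervalIntegrable f volume a b := hint k hk
    have h1 : (∫ x in a..b, f x) ≤ ∫ x in a..b, M :=
      intervalIntegral.integral_mono_on (le_of_lt hab) hint'
        intervalIntegrable_const hfM
    rw [intervalIntegral.integral_const, smul_eq_mul] at h1
    refine le_trans h1 ?_
    -- show (b - a) * M ≤ 1
    rw [mul_max_of_nonneg _ _ (le_of_lt hΔ)]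
    apply max_le
    · have := hres k hk
      rw [mul_one_div]
      exact (div_le_one hρ).mpr this
    · rcases eq_or_lt_of_le hK0 with h0 | h0
      · rw [← h0, zero_div, Real.sqrt_zero, mul_zero, mul_zero]
        exact zero_le_one
      · have hc := hcurv k hk h0
        have hsqrtpos : 0 ≤ Real.sqrt (K / (8 * δ)) := Real.sqrt_nonneg _
        calc (b - a) * (vmin * Real.sqrt (K / (8 * δ)))
            ≤ (1 / vmin) * Real.sqrt (8 * δ / K) * (vmin * Real.sqrt (K / (8 * δ))) := by
              apply mul_le_mul_of_nonneg_right hc (by positivity)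
          _ = Real.sqrt (8 * δ / K) * Real.sqrt (K / (8 * δ)) := by
              field_simp
          _ = Real.sqrt ((8 * δ / K) * (K / (8 * δ))) := by
              rw [← Real.sqrt_mul (by positivity)]
          _ = 1 := by
              rw [show (8 * δ / K) * (K / (8 * δ)) = 1 by field_simp]
              exact Real.sqrt_one
  calc (∑ k ∈ Finset.range N, ∫ x in s k..s (k + 1), f x)
      ≤ ∑ k ∈ Finset.range N, (1 : ℝ) := Finset.sum_le_sum hbound
    _ = N := by simp
end

section
/- Let L, δ, v_min > 0 and let κ : [0, L] → ℝ be nonnegative and continuous. Suppose N ∈ ℕ and 0 = s₀ < ⋯ < s_N = L is a partition such that for every k < N and every u ∈ [s_k, s_{k+1}] with κ(u) > 0 one has s_{k+1} − s_k ≤ (1/v_min) · √(8δ/κ(u)). Then N ≥ v_min · ∫₀ᴸ √(κ(s)/(8δ)) ds. -/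
open MeasureTheory intervalIntegral Set

/-- High-curvature (explicit CoT) case of the Curvature–Resolution theorem:
only the curvature-induced constraint remains, and the number of steps is
lower-bounded by the curvature integral `v_min · ∫₀ᴸ √(κ(s)/(8δ)) ds`. -/
theorem curvature_only_bound (L δ vmin : ℝ) (hL : 0 < L) (hδ : 0 < δ)
    (hv : 0 < vmin) (κ : ℝ → ℝ)
    (hκcont : ContinuousOn κ (Icc 0 L))
    (hκ0 : ∀ u ∈ Icc (0 : ℝ) L, 0 ≤ κ u)
    (N : ℕ) (s : ℕ → ℝ) (hs0 : s 0 = 0) (hsN : s N = L)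
    (hmono : ∀ k < N, s k < s (k + 1))
    (hcurv : ∀ k < N, ∀ u ∈ Icc (s k) (s (k + 1)), 0 < κ u →
      s (k + 1) - s k ≤ (1 / vmin) * Real.sqrt (8 * δ / κ u)) :
    (N : ℝ) ≥ vmin * ∫ x in (0:ℝ)..L, Real.sqrt (κ x / (8 * δ)) := by
  set f : ℝ → ℝ := fun x => Real.sqrt (κ x / (8 * δ)) with hf
  have h8δ : (0:ℝ) < 8 * δ := by linarith
  have hfcont : ContinuousOn f (Icc 0 L) :=
    Real.continuous_sqrt.comp_continuousOn (hκcont.div_const _)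
  -- monotonicity of s on [0, N]
  have smono : ∀ i j, i ≤ j → j ≤ N → s i ≤ s j := by
    intro i j hij hjN
    induction j with
    | zero => simp_all
    | succ j ih =>
      rcases Nat.lt_or_ge i (j+1) with h | h
      · have h1 : s i ≤ s j := ih (Nat.lt_succ_iff.mp h) (le_of_lt (Nat.lt_of_succ_le hjN))
        exact h1.trans (le_of_lt (hmono j (Nat.lt_of_succ_le hjN)))
      · have : i = j + 1 := le_antisymm hij h
        simp [this]
  have hsub : ∀ k < N, Icc (s k) (s (k+1)) ⊆ Icc 0 L := by
    intro k hk x hx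
    constructor
    · have : s 0 ≤ s k := smono 0 k (Nat.zero_le _) (le_of_lt hk)
      linarith [hx.1, hs0 ▸ this]
    · have : s (k+1) ≤ s N := smono (k+1) N hk (le_refl _)
      linarith [hx.2, hsN ▸ this]
  have hint : ∀ k < N, IntervalIntegrable f volume (s k) (s (k+1)) := by
    intro k hk
    apply ContinuousOn.intervalIntegrable
    have : uIcc (s k) (s (k+1)) = Icc (s k) (s (k+1)) :=
      uIcc_of_le (le_of_lt (hmono k hk))
    rw [this]
    exact hfcont.mono (hsub k hk)
  -- each subinterval integral is ≤ 1/vmin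
  have hkey : ∀ k < N, (∫ x in (s k)..(s (k+1)), f x) ≤ 1 / vmin := by
    intro k hk
    have hab : s k ≤ s (k+1) := le_of_lt (hmono k hk)
    obtain ⟨u, hu, humax⟩ := (isCompact_Icc (a := s k) (b := s (k+1))).exists_isMaxOn
      (nonempty_Icc.mpr hab) ((hκcont.mono (hsub k hk)))
    rcases le_or_gt (κ u) 0 with h0 | hpos
    · -- κ ≡ 0 on the interval
      have hzero : ∀ x ∈ Icc (s k) (s (k+1)), f x = 0 := by
        intro x hx
        have h1 : κ x ≤ κ u := humax hx
        have h2 : 0 ≤ κ x := hκ0 x (hsub k hk hx)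
        have : κ x = 0 := le_antisymm (h1.trans h0) h2
        simp [hf, this]
      have : (∫ x in (s k)..(s (k+1)), f x) = 0 := by
        rw [intervalIntegral.integral_congr (g := fun _ => 0)]
        · simp
        · intro x hx
          rw [uIcc_of_le hab] at hx
          exact hzero x hx
      rw [this]
      positivity
    · -- bound f by its value at the max of κ
      set C := Real.sqrt (κ u / (8 * δ)) with hC
      have hCpos : 0 < C := Real.sqrt_pos.mpr (div_pos hpos h8δ)
      have hbound : (∫ x in (s k)..(s (k+1)), f x) ≤ (s (k+1) - s k) * C := by
        calc (∫ x in (s k)..(s (k+1)), f x)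
            ≤ ∫ _x in (s k)..(s (k+1)), C := by
              apply intervalIntegral.integral_mono_on hab (hint k hk)
                (intervalIntegrable_const)
              intro x hx
              exact Real.sqrt_le_sqrt (by gcongr; exact humax hx)
          _ = (s (k+1) - s k) * C := by simp
      have hlen : s (k+1) - s k ≤ (1 / vmin) * Real.sqrt (8 * δ / κ u) :=
        hcurv k hk u hu hpos
      have hprod : Real.sqrt (8 * δ / κ u) * C = 1 := by
        rw [hC, ← Real.sqrt_mul (by positivity)]
        rw [div_mul_div_comm]
        rw [mul_comm (8*δ) (κ u)]
        rw [div_self (by positivity)]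
        exact Real.sqrt_one
      calc (∫ x in (s k)..(s (k+1)), f x) ≤ (s (k+1) - s k) * C := hbound
        _ ≤ ((1 / vmin) * Real.sqrt (8 * δ / κ u)) * C :=
            mul_le_mul_of_nonneg_right hlen hCpos.le
        _ = (1 / vmin) * (Real.sqrt (8 * δ / κ u) * C) := by ring
        _ = 1 / vmin := by rw [hprod, mul_one]
  -- sum over the partition
  have hsplit : (∫ x in (0:ℝ)..L, f x)
      = ∑ k ∈ Finset.range N, ∫ x in (s k)..(s (k+1)), f x := by
    rw [← hs0, ← hsN]
    exact (intervalIntegral.sum_integral_adjacent_intervals (fun k hk => hint k hk)).symm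
  have hsum : (∫ x in (0:ℝ)..L, f x) ≤ (N : ℝ) * (1 / vmin) := by
    rw [hsplit]
    calc ∑ k ∈ Finset.range N, ∫ x in (s k)..(s (k+1)), f x
        ≤ ∑ _k ∈ Finset.range N, (1 / vmin) :=
          Finset.sum_le_sum (fun k hk => hkey k (Finset.mem_range.mp hk))
      _ = (N : ℝ) * (1 / vmin) := by simp [mul_comm]
  have := mul_le_mul_of_nonneg_left hsum hv.le
  rw [ge_iff_le]
  calc vmin * ∫ x in (0:ℝ)..L, f x ≤ vmin * ((N:ℝ) * (1/vmin)) := this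
    _ = (N : ℝ) := by field_simp
end
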